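/- Let G = ({1,2,3,4}, R) be a holey 3-hypertournament with (1,3,4) ∈ R, (1,4,2) ∈ R, and with {1,2,3} and {2,3,4} holes. If (G, R') is a completion of G (an H₄-free 3-hypertournament with R ⊆ R') and (1,2,3) ∈ R', then (2,3,4) ∈ R'. -/
import Mathlib


def IsHyper3 {T : Type*} (R : T → T → T → Prop) : Prop :=
  (∀ a b c, R a b c → a ≠ b ∧ b ≠ c ∧ a ≠ c) ∧
  (∀ a b c, R a b c → R b c a) ∧
  (∀ a b c, a ≠ b → b ≠ c → a ≠ c → (R a b c ↔ ¬ R a c b))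

/-- The 3-hypertournament H₄ on 4 points (automorphism group Alt(4)); with respect to
the natural order of Fin 4 its hyperedges are {0,1,2} and {0,2,3}. -/
def H4rel : Fin 4 → Fin 4 → Fin 4 → Prop := fun x y z =>
  (x,y,z) = ((0,1,2) : Fin 4 × Fin 4 × Fin 4) ∨ (x,y,z) = ((1,2,0) : Fin 4 × Fin 4 × Fin 4) ∨
  (x,y,z) = ((2,0,1) : Fin 4 × Fin 4 × Fin 4) ∨ (x,y,z) = ((0,3,1) : Fin 4 × Fin 4 × Fin 4) ∨
  (x,y,z) = ((3,1,0) : Fin 4 × Fin 4 × Fin 4) ∨ (x,y,z) = ((1,0,3) : Fin 4 × Fin 4 × Fin 4) ∨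
  (x,y,z) = ((0,2,3) : Fin 4 × Fin 4 × Fin 4) ∨ (x,y,z) = ((2,3,0) : Fin 4 × Fin 4 × Fin 4) ∨
  (x,y,z) = ((3,0,2) : Fin 4 × Fin 4 × Fin 4) ∨ (x,y,z) = ((1,3,2) : Fin 4 × Fin 4 × Fin 4) ∨
  (x,y,z) = ((3,2,1) : Fin 4 × Fin 4 × Fin 4) ∨ (x,y,z) = ((2,1,3) : Fin 4 × Fin 4 × Fin 4)

/-- R contains no induced copy of H₄. -/
def H4FreeOn {A : Type*} (R : A → A → A → Prop) : Prop :=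
  ¬ ∃ f : Fin 4 → A, Function.Injective f ∧ ∀ x y z, H4rel x y z ↔ R (f x) (f y) (f z)

/-- the gadget G on vertices 0,1,2,3 (representing 1,2,3,4) has
(1,3,4)=(0,2,3) and (1,4,2)=(0,3,1) oriented (with their cyclic rotations) and holes
{1,2,3},{2,3,4}. In any H₄-free completion R', if (1,2,3)=(0,1,2) ∈ R' then
(2,3,4)=(1,2,3) ∈ R'. -/
theorem stmt8 (R' : Fin 4 → Fin 4 → Fin 4 → Prop)
    (hext : R' 0 2 3 ∧ R' 2 3 0 ∧ R' 3 0 2 ∧ R' 0 3 1 ∧ R' 3 1 0 ∧ R' 1 0 3)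
    (hhyper : IsHyper3 R') (hfree : H4FreeOn R')
    (h123 : R' 0 1 2) : R' 1 2 3 := by
  by_contra h
  obtain ⟨hne, hrot, htot⟩ := hhyper
  obtain ⟨e1, e2, e3, e4, e5, e6⟩ := hext
  have p1 : R' 1 2 0 := hrot _ _ _ h123
  have p2 : R' 2 0 1 := hrot _ _ _ p1
  have q1 : R' 1 3 2 := (htot 1 3 2 (by decide) (by decide) (by decide)).mpr h
  have q2 : R' 3 2 1 := hrot _ _ _ q1
  have q3 : R' 2 1 3 := hrot _ _ _ q2
  apply hfree
  refine ⟨id, Function.injective_id, ?_⟩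
  intro x y z
  constructor
  · intro hx
    simp only [id_eq]
    rcases hx with hh|hh|hh|hh|hh|hh|hh|hh|hh|hh|hh|hh <;>
      · rw [Prod.ext_iff, Prod.ext_iff] at hh
        obtain ⟨h1, h2, h3⟩ := hh
        subst h1; subst h2; subst h3; assumption
  · intro hr
    simp only [id_eq] at hr
    fin_cases x <;> fin_cases y <;> fin_cases z <;>
      first
        | exact absurd rfl (hne _ _ _ hr).1
        | exact absurd rfl (hne _ _ _ hr).2.1
        | exact absurd rfl (hne _ _ _ hr).2.2
        | (unfold H4rel; decide)
        | exact absurd (by assumption)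
            ((htot _ _ _ (by decide) (by decide) (by decide)).mp hr)
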